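/- Let c > 0 and define φ(r,s) := c·√(r² + 4r(r² − s²)) / ( r·(1 + 4r) ) on {(r,s) ∈ ℝ² : 0 < s < r}. With Q := (1/(2r))(r·φ_ss − φ_r + s·φ_rs)/(φ − s·φ_s + (r² − s²)·φ_ss), P := (r·φ_s + s·φ_r)/(2rφ) − (Q/φ)(s·φ + (r² − s²)·φ_s), R₁ := P² − (1/r)(s·P_r + r·P_s) + 2Q(1 + s·P + (r² − s²)·P_s), R₂ := 2Q(2Q − s·Q_s) + (1/r)(2Q_r − s·Q_rs − r·Q_ss) + (r² − s²)(2Q·Q_ss − Q_s²) and R₃ := (1/r)( (2(r² − s²)Q − 1)·r·P_ss − s·P_rs + P_r + 2rQ·(P − s·P_s) ), one has R₂ = 0, R₃ = 0 and R₁ = −(4/c²)·φ² identically on this domain. -/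

import Mathlib

/-- Partial derivative with respect to the first variable `r`. -/
noncomputable def pderivR (f : ℝ → ℝ → ℝ) (r s : ℝ) : ℝ := deriv (fun t => f t s) r

/-- Partial derivative with respect to the second variable `s`. -/
noncomputable def pderivS (f : ℝ → ℝ → ℝ) (r s : ℝ) : ℝ := deriv (fun t => f r t) s

/-- Geodesic coefficient `Q := (1/(2r))·(rφ_ss − φ_r + sφ_rs)/(φ − sφ_s + (r² − s²)φ_ss)`. -/
noncomputable def Qc (φ : ℝ → ℝ → ℝ) (r s : ℝ) : ℝ :=
  (1 / (2 * r)) *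
    ((r * pderivS (pderivS φ) r s - pderivR φ r s + s * pderivR (pderivS φ) r s) /
      (φ r s - s * pderivS φ r s + (r ^ 2 - s ^ 2) * pderivS (pderivS φ) r s))

/-- Geodesic coefficient `P := (rφ_s + sφ_r)/(2rφ) − (Q/φ)·(sφ + (r² − s²)φ_s)`. -/
noncomputable def Pc (φ : ℝ → ℝ → ℝ) (r s : ℝ) : ℝ :=
  (r * pderivS φ r s + s * pderivR φ r s) / (2 * r * φ r s)
    - (Qc φ r s / φ r s) * (s * φ r s + (r ^ 2 - s ^ 2) * pderivS φ r s)

/-- `R₁ := P² − (1/r)(sP_r + rP_s) + 2Q(1 + sP + (r² − s²)P_s)`. -/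
noncomputable def R1 (P Q : ℝ → ℝ → ℝ) (r s : ℝ) : ℝ :=
  (P r s) ^ 2 - (1 / r) * (s * pderivR P r s + r * pderivS P r s)
    + 2 * Q r s * (1 + s * P r s + (r ^ 2 - s ^ 2) * pderivS P r s)

/-- `R₂ := 2Q(2Q − sQ_s) + (1/r)(2Q_r − sQ_rs − rQ_ss) + (r² − s²)(2Q·Q_ss − Q_s²)`. -/
noncomputable def R2 (Q : ℝ → ℝ → ℝ) (r s : ℝ) : ℝ :=
  2 * Q r s * (2 * Q r s - s * pderivS Q r s)
    + (1 / r) * (2 * pderivR Q r s - s * pderivR (pderivS Q) r s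
        - r * pderivS (pderivS Q) r s)
    + (r ^ 2 - s ^ 2) * (2 * Q r s * pderivS (pderivS Q) r s - (pderivS Q r s) ^ 2)

/-- `R₃ := (1/r)((2(r² − s²)Q − 1)·r·P_ss − s·P_rs + P_r + 2rQ(P − sP_s))`. -/
noncomputable def R3 (P Q : ℝ → ℝ → ℝ) (r s : ℝ) : ℝ :=
  (1 / r) * ((2 * (r ^ 2 - s ^ 2) * Q r s - 1) * r * pderivS (pderivS P) r s
    - s * pderivR (pderivS P) r s + pderivR P r s
    + 2 * r * Q r s * (P r s - s * pderivS P r s))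

/-- Example 9: `φ(r,s) := c·√(r² + 4r(r² − s²))/(r(1 + 4r))`. -/
noncomputable def φ16 (c r s : ℝ) : ℝ :=
  c * Real.sqrt (r ^ 2 + 4 * r * (r ^ 2 - s ^ 2)) / (r * (1 + 4 * r))


/-! On the open wedge `0 < s < r` the coefficients `Q` and `P` of `φ16 c` are the rational
functions `Q16 = (s² − r²)/r³` and `P16 = −2s/(r(1 + 4r))`: the square root cancels once `φ`
and its partial derivatives are written over the common factor `√(r² + 4r(r² − s²))`.
Since `R₁, R₂, R₃` only involve values and partial derivatives at points of this open set,
they may be computed from `Q16` and `P16`, where they reduce to identities between rational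
functions. -/

open Real Set Filter

def EqOnWedge (f g : ℝ → ℝ → ℝ) : Prop :=
  ∀ r s, 0 < s → s < r → f r s = g r s

namespace EqOnWedge

variable {f g P Q p q : ℝ → ℝ → ℝ}

theorem pderivS (h : EqOnWedge f g) : EqOnWedge (_root_.pderivS f) (_root_.pderivS g) := by
  intro r s hs hsr
  refine EventuallyEq.deriv_eq ?_
  filter_upwards [Ioo_mem_nhds hs hsr] with t ht using h r t ht.1 ht.2

theorem pderivR (h : EqOnWedge f g) : EqOnWedge (_root_.pderivR f) (_root_.pderivR g) := by
  intro r s hs hsr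
  refine EventuallyEq.deriv_eq ?_
  filter_upwards [Ioi_mem_nhds hsr] with t ht using h t s hs ht

theorem R1 (hP : EqOnWedge P p) (hQ : EqOnWedge Q q) :
    EqOnWedge (_root_.R1 P Q) (_root_.R1 p q) := by
  intro r s hs hsr
  simp only [_root_.R1, hP r s hs hsr, hQ r s hs hsr, hP.pderivS r s hs hsr,
    hP.pderivR r s hs hsr]

theorem R2 (hQ : EqOnWedge Q q) : EqOnWedge (_root_.R2 Q) (_root_.R2 q) := by
  intro r s hs hsr
  simp only [_root_.R2, hQ r s hs hsr, hQ.pderivS r s hs hsr, hQ.pderivR r s hs hsr,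
    hQ.pderivS.pderivS r s hs hsr, hQ.pderivS.pderivR r s hs hsr]

theorem R3 (hP : EqOnWedge P p) (hQ : EqOnWedge Q q) :
    EqOnWedge (_root_.R3 P Q) (_root_.R3 p q) := by
  intro r s hs hsr
  simp only [_root_.R3, hP r s hs hsr, hQ r s hs hsr, hP.pderivS r s hs hsr,
    hP.pderivR r s hs hsr, hP.pderivS.pderivS r s hs hsr, hP.pderivS.pderivR r s hs hsr]

end EqOnWedge

def rad16 (r s : ℝ) : ℝ := r ^ 2 + 4 * r * (r ^ 2 - s ^ 2)

theorem rad16_pos {r s : ℝ} (hs : 0 < s) (hsr : s < r) : 0 < rad16 r s := by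
  unfold rad16
  nlinarith [mul_pos (hs.trans hsr) (mul_pos (sub_pos.2 hsr) (add_pos (hs.trans hsr) hs))]

theorem φ16_eq (c r s : ℝ) :
    φ16 c r s = c * rad16 r s / (r * (1 + 4 * r) * √(rad16 r s)) := by
  rw [φ16, ← rad16]
  nth_rw 1 [← Real.div_sqrt]
  rw [mul_div_assoc', div_div, mul_comm √(rad16 r s)]

noncomputable def Q16 (r s : ℝ) : ℝ := (s ^ 2 - r ^ 2) / r ^ 3

noncomputable def P16 (r s : ℝ) : ℝ := -(2 * s) / (r * (1 + 4 * r))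

theorem pderivS_Q16 : pderivS Q16 = fun r s => 2 * s / r ^ 3 := by
  ext r s
  simp [pderivS, Q16]

theorem pderivS_P16 : pderivS P16 = fun r _ => -2 / (r * (1 + 4 * r)) := by
  ext r s
  simp [pderivS, P16]

theorem pderivS_pderivS_Q16 : pderivS (pderivS Q16) = fun r _ => 2 / r ^ 3 := by
  rw [pderivS_Q16]
  ext r s
  simp [pderivS]

theorem pderivS_pderivS_P16 : pderivS (pderivS P16) = fun _ _ => 0 := by
  rw [pderivS_P16]
  ext r s
  simp [pderivS]

theorem hasDerivAt_mul_one_add_four_mul (r : ℝ) :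
    HasDerivAt (fun t : ℝ => t * (1 + 4 * t)) (1 + 8 * r) r := by
  refine ((hasDerivAt_id' r).mul (((hasDerivAt_id' r).const_mul 4).const_add 1)).congr_deriv ?_
  ring

section

variable {r : ℝ} (s : ℝ)

theorem pderivR_Q16 (hr : r ≠ 0) : pderivR Q16 r s = (r ^ 2 - 3 * s ^ 2) / r ^ 4 := by
  have h : HasDerivAt (fun t => Q16 t s) _ r :=
    ((hasDerivAt_pow 2 r).const_sub (s ^ 2)).div (hasDerivAt_pow 3 r) (pow_ne_zero 3 hr)
  rw [pderivR, h.deriv]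
  field_simp
  ring

theorem pderivR_pderivS_Q16 (hr : r ≠ 0) : pderivR (pderivS Q16) r s = -(6 * s) / r ^ 4 := by
  have h : HasDerivAt (fun t => 2 * s / t ^ 3) _ r :=
    (hasDerivAt_const r (2 * s)).div (hasDerivAt_pow 3 r) (pow_ne_zero 3 hr)
  rw [pderivR, pderivS_Q16, h.deriv]
  field_simp
  ring

theorem pderivR_P16 (hr : 0 < r) :
    pderivR P16 r s = 2 * s * (1 + 8 * r) / (r * (1 + 4 * r)) ^ 2 := by
  have h : HasDerivAt (fun t => P16 t s) _ r :=
    (hasDerivAt_const r _).div (hasDerivAt_mul_one_add_four_mul r) (by positivity)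
  rw [pderivR, h.deriv]
  ring

theorem pderivR_pderivS_P16 (hr : 0 < r) :
    pderivR (pderivS P16) r s = 2 * (1 + 8 * r) / (r * (1 + 4 * r)) ^ 2 := by
  have h : HasDerivAt (fun t => -2 / (t * (1 + 4 * t))) _ r :=
    (hasDerivAt_const r _).div (hasDerivAt_mul_one_add_four_mul r) (by positivity)
  rw [pderivR, pderivS_P16, h.deriv]
  ring

theorem R2_Q16 (hr : r ≠ 0) : R2 Q16 r s = 0 := by
  rw [R2, pderivS_pderivS_Q16, pderivR_Q16 s hr, pderivR_pderivS_Q16 s hr, pderivS_Q16, Q16]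
  field_simp
  ring

theorem R3_P16_Q16 (hr : 0 < r) : R3 P16 Q16 r s = 0 := by
  rw [R3, pderivS_pderivS_P16, pderivR_P16 s hr, pderivR_pderivS_P16 s hr, pderivS_P16,
    Q16, P16]
  field_simp
  ring

theorem R1_P16_Q16 (hr : 0 < r) :
    R1 P16 Q16 r s = -4 * rad16 r s / (r * (1 + 4 * r)) ^ 2 := by
  rw [R1, pderivR_P16 s hr, pderivS_P16, Q16, P16, rad16]
  field_simp
  ring

end

theorem hasDerivAt_sqrt_rad16_snd {r s : ℝ} (h : 0 < rad16 r s) :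
    HasDerivAt (fun t => √(rad16 r t)) (-(4 * r * s) / √(rad16 r s)) s := by
  have hA : HasDerivAt (fun t => rad16 r t) (-(8 * r * s)) s := by
    refine (((hasDerivAt_pow 2 s).const_sub (r ^ 2)).const_mul (4 * r)
      |>.const_add (r ^ 2)).congr_deriv ?_
    ring
  refine (hA.sqrt h.ne').congr_deriv ?_
  field_simp
  ring

theorem hasDerivAt_sqrt_rad16_fst {r s : ℝ} (h : 0 < rad16 r s) :
    HasDerivAt (fun t => √(rad16 t s)) ((r + 6 * r ^ 2 - 2 * s ^ 2) / √(rad16 r s)) r := by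
  have hA : HasDerivAt (fun t => rad16 t s) (2 * r + 12 * r ^ 2 - 4 * s ^ 2) r := by
    refine ((hasDerivAt_pow 2 r).add (((hasDerivAt_id' r).const_mul 4).mul
      ((hasDerivAt_pow 2 r).sub_const (s ^ 2)))).congr_deriv ?_
    ring
  refine (hA.sqrt h.ne').congr_deriv ?_
  field_simp
  ring

section

variable (c : ℝ)

theorem pderivS_φ16 :
    EqOnWedge (pderivS (φ16 c)) fun r s => -4 * c * s / ((1 + 4 * r) * √(rad16 r s)) := by
  intro r s hs hsr
  have hr : 0 < r := hs.trans hsr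
  have hu : 0 < √(rad16 r s) := Real.sqrt_pos.2 (rad16_pos hs hsr)
  have h : HasDerivAt (fun t => φ16 c r t) _ s :=
    ((hasDerivAt_sqrt_rad16_snd (rad16_pos hs hsr)).const_mul c).div_const (r * (1 + 4 * r))
  rw [pderivS, h.deriv]
  field_simp

theorem pderivR_φ16 :
    EqOnWedge (pderivR (φ16 c)) fun r s =>
      2 * c * (s ^ 2 - r ^ 2 + 4 * r * (3 * s ^ 2 - r ^ 2))
        / (r * (1 + 4 * r) ^ 2 * √(rad16 r s)) := by
  intro r s hs hsr
  have hr : 0 < r := hs.trans hsr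
  have hA := rad16_pos hs hsr
  have hu : 0 < √(rad16 r s) := Real.sqrt_pos.2 hA
  have h : HasDerivAt (fun t => φ16 c t s) _ r :=
    ((hasDerivAt_sqrt_rad16_fst hA).const_mul c).div (hasDerivAt_mul_one_add_four_mul r)
      (by positivity)
  rw [pderivR, h.deriv]
  field_simp
  rw [Real.sq_sqrt hA.le, rad16]
  ring

theorem pderivS_pderivS_φ16 :
    EqOnWedge (pderivS (pderivS (φ16 c))) fun r s =>
      -(4 * c * r ^ 2) / (rad16 r s * √(rad16 r s)) := by
  intro r s hs hsr
  have hr : 0 < r := hs.trans hsr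
  have hA := rad16_pos hs hsr
  have hu : 0 < √(rad16 r s) := Real.sqrt_pos.2 hA
  have h : HasDerivAt (fun t => -4 * c * t / ((1 + 4 * r) * √(rad16 r t))) _ s :=
    ((hasDerivAt_id' s).const_mul (-4 * c)).div
      ((hasDerivAt_sqrt_rad16_snd hA).const_mul (1 + 4 * r)) (by positivity)
  rw [(pderivS_φ16 c).pderivS r s hs hsr, pderivS, h.deriv]
  field_simp
  rw [Real.sq_sqrt hA.le, rad16]
  ring

theorem pderivR_pderivS_φ16 :
    EqOnWedge (pderivR (pderivS (φ16 c))) fun r s =>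
      4 * c * s * (r + 14 * r ^ 2 + 40 * r ^ 3 - 2 * s ^ 2 - 24 * r * s ^ 2)
        / ((1 + 4 * r) ^ 2 * rad16 r s * √(rad16 r s)) := by
  intro r s hs hsr
  have hr : 0 < r := hs.trans hsr
  have hA := rad16_pos hs hsr
  have hu : 0 < √(rad16 r s) := Real.sqrt_pos.2 hA
  have h : HasDerivAt (fun t => -4 * c * s / ((1 + 4 * t) * √(rad16 t s))) _ r :=
    (hasDerivAt_const r _).div (((hasDerivAt_id' r).const_mul 4).const_add 1 |>.mul
      (hasDerivAt_sqrt_rad16_fst hA)) (by positivity)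
  rw [(pderivS_φ16 c).pderivR r s hs hsr, pderivR, h.deriv]
  field_simp
  rw [Real.sq_sqrt hA.le, rad16]
  ring

variable {c}

theorem Qc_φ16 (hc : c ≠ 0) : EqOnWedge (Qc (φ16 c)) Q16 := by
  intro r s hs hsr
  have hr : 0 < r := hs.trans hsr
  have hA := rad16_pos hs hsr
  have hu : 0 < √(rad16 r s) := Real.sqrt_pos.2 hA
  have hden : φ16 c r s - s * pderivS (φ16 c) r s
      + (r ^ 2 - s ^ 2) * pderivS (pderivS (φ16 c)) r s
      = c * r ^ 3 / (rad16 r s * √(rad16 r s)) := by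
    rw [pderivS_φ16 c r s hs hsr, pderivS_pderivS_φ16 c r s hs hsr, φ16_eq]
    field_simp
    rw [rad16]
    ring
  rw [Qc, hden, pderivS_pderivS_φ16 c r s hs hsr, pderivR_φ16 c r s hs hsr,
    pderivR_pderivS_φ16 c r s hs hsr, Q16]
  field_simp
  rw [rad16]
  ring

theorem Pc_φ16 (hc : c ≠ 0) : EqOnWedge (Pc (φ16 c)) P16 := by
  intro r s hs hsr
  have hr : 0 < r := hs.trans hsr
  have hA := rad16_pos hs hsr
  have hu : 0 < √(rad16 r s) := Real.sqrt_pos.2 hA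
  rw [Pc, Qc_φ16 hc r s hs hsr, pderivS_φ16 c r s hs hsr, pderivR_φ16 c r s hs hsr, φ16_eq,
    Q16, P16]
  field_simp
  rw [rad16]
  ring

end

/-- Example 9: `φ16` has `R₂ = 0`, `R₃ = 0` and `R₁ = −(4/c²)·φ²`, i.e. it gives
a Douglas metric of constant flag curvature `K = −4/c²`. -/
theorem stmt_16 (c : ℝ) (hc : 0 < c) :
    ∀ r s : ℝ, 0 < s → s < r →
      R2 (Qc (φ16 c)) r s = 0
      ∧ R3 (Pc (φ16 c)) (Qc (φ16 c)) r s = 0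
      ∧ R1 (Pc (φ16 c)) (Qc (φ16 c)) r s = -(4 / c ^ 2) * (φ16 c r s) ^ 2 := by
  intro r s hs hsr
  have hr : 0 < r := hs.trans hsr
  have hQ := Qc_φ16 hc.ne'
  have hP := Pc_φ16 hc.ne'
  refine ⟨?_, ?_, ?_⟩
  · rw [hQ.R2 r s hs hsr, R2_Q16 s hr.ne']
  · rw [hP.R3 hQ r s hs hsr, R3_P16_Q16 s hr]
  · rw [hP.R1 hQ r s hs hsr, R1_P16_Q16 s hr, φ16, ← rad16, div_pow, mul_pow c,
      Real.sq_sqrt (rad16_pos hs hsr).le]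
    field_simp
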